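/- Let G be a connected locally finite graph whose isoperimetric profile satisfies Φ(k) ≥ c·k/(log k)^{1/α} for all k ≥ 2, for some constant c > 0 and some 0 < α ≤ 1. Fix any β with 0 < β < α/(α+1), and let f : ℕ → ℕ satisfy f(n) = o(e^{n^β}). Then G does not satisfy the {f(n)}-containment property; moreover there exists C > 0 such that no initial fire of size at least C can be contained by deploying at most f(n) firefighters at time n. -/

import Mathlib

open Filter Real

/-- The outer vertex boundary of a set of vertices: vertices outside `K`
adjacent to some vertex of `K`. -/
def SimpleGraph.outerBoundary {V : Type*} (G : SimpleGraph V) (K : Set V) : Set V :=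
  {v | v ∉ K ∧ ∃ u ∈ K, G.Adj u v}

/-- The (vertex) isoperimetric profile of a graph:
`Φ(k) = inf {|∂K| : K ⊆ V, |K| = k}`. -/
noncomputable def SimpleGraph.isoProfile {V : Type*} (G : SimpleGraph V) (k : ℕ) : ℕ :=
  sInf {m | ∃ K : Set V, K.Finite ∧ K.ncard = k ∧ (G.outerBoundary K).ncard = m}

/-- A valid play of the firefighter game on `G` against at most `f n` firefighters
deployed at step `n`. `K n` is the set of burning vertices at time `n`, and `P n`
is the cumulative set of protected vertices at time `n`: at each step at most
`f (n+1)` new vertices, none of them on fire, become protected, and then the fire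
spreads to all unprotected neighbours of burning vertices. -/
structure FireStrategy {V : Type*} (G : SimpleGraph V) (f : ℕ → ℕ) (K P : ℕ → Set V) : Prop where
  burning_finite : ∀ n, (K n).Finite
  protected_finite : ∀ n, (P n).Finite
  protected_zero : P 0 = ∅
  protected_mono : ∀ n, P n ⊆ P (n + 1)
  protected_card : ∀ n, (P (n + 1) \ P n).ncard ≤ f (n + 1)
  protected_not_burning : ∀ n, Disjoint (P (n + 1)) (K n)
  spread : ∀ n, K (n + 1) = K n ∪ (G.outerBoundary (K n) \ P (n + 1))

/-- `G` has the `{f(n)}`-containment property if every finite initial fire admits a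
strategy protecting at most `f n` vertices at step `n` under which the set of burning
vertices is eventually constant. -/
def HasContainment {V : Type*} (G : SimpleGraph V) (f : ℕ → ℕ) : Prop :=
  ∀ K₀ : Set V, K₀.Finite →
    ∃ K P : ℕ → Set V, K 0 = K₀ ∧ FireStrategy G f K P ∧ ∃ N, ∀ n, N ≤ n → K n = K N

/-- The Cayley graph of a group w.r.t. a finite (symmetric) set `S`. -/
def cayleyGraph {Γ : Type*} [Group Γ] (S : Finset Γ) : SimpleGraph Γ :=
  SimpleGraph.fromRel (fun g h => g⁻¹ * h ∈ S)

/-- The growth function of a group w.r.t. a finite generating set: the number of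
elements expressible as a product of at most `n` generators, i.e. `|B_n(id)|` in the
word metric. -/
noncomputable def growth {Γ : Type*} [Group Γ] (S : Finset Γ) (n : ℕ) : ℕ :=
  Set.ncard {g : Γ | ∃ l : List Γ, l.length ≤ n ∧ (∀ x ∈ l, x ∈ (S : Set Γ)) ∧ l.prod = g}

/-!
Write `k n = |K n|` and `ψ k = c k / (log k)^(1/α)`. Unprotected boundary vertices catch fire, so
`k (n+1) + |P (n+1)| ≥ k n + ψ (k n)`, while `|P (n+1)| ≤ ∑ f ≤ D (n+1) e^((n+1)^β)`.
For `γ = α/(α+1)` and small `b > 0` the barrier `g n = exp ((b (n+1))^γ)` grows by at most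
`ψ (g n) / 2` per step, and the protection budget is eventually below `ψ (g n) / 2` because
`β < γ`. As `ψ` increases beyond `e^(1/α)`, a fire that is above the barrier at a late time `n₀`
stays above it. A fire that stops spreading at time `n` has its whole boundary protected, which
forces `ψ (g n) ≤ ∑ f`, against the barrier inequality. Fires never shrink, so every initial fire
of size at least `⌈g n₀⌉` spreads forever.
-/

open Asymptotics

lemma exp_div_rpow_le_exp_div_rpow {p u v : ℝ} (hp : 0 < p) (hpu : p ≤ u) (huv : u ≤ v) :
    exp u / u ^ p ≤ exp v / v ^ p := by
  have hu : 0 < u := hp.trans_le hpu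
  have hv : 0 < v := hu.trans_le huv
  have hlog : p * log (v / u) ≤ v - u :=
    calc p * log (v / u) ≤ p * (v / u - 1) :=
          mul_le_mul_of_nonneg_left (log_le_sub_one_of_pos (div_pos hv hu)) hp.le
      _ = p / u * (v - u) := by field_simp
      _ ≤ 1 * (v - u) := mul_le_mul_of_nonneg_right ((div_le_one hu).2 hpu) (by linarith)
      _ = v - u := one_mul _
  have hratio : (v / u) ^ p ≤ exp (v - u) := by
    rw [rpow_def_of_pos (div_pos hv hu), mul_comm]
    exact exp_le_exp.2 hlog
  rw [div_rpow hv.le hu.le, div_le_iff₀ (rpow_pos_of_pos hu p), exp_sub] at hratio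
  rw [div_le_div_iff₀ (rpow_pos_of_pos hu p) (rpow_pos_of_pos hv p)]
  calc exp u * v ^ p ≤ exp u * (exp v / exp u * u ^ p) :=
        mul_le_mul_of_nonneg_left hratio (exp_pos u).le
    _ = exp v * u ^ p := by field_simp

lemma monotoneOn_mul_div_log_rpow {c p : ℝ} (hc : 0 ≤ c) (hp : 0 < p) :
    MonotoneOn (fun x => c * x / log x ^ p) (Set.Ici (exp p)) := by
  intro x hx y hy hxy
  have hx0 : 0 < x := (exp_pos p).trans_le hx
  have hlog : p ≤ log x := (le_log_iff_exp_le hx0).2 hx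
  have h := exp_div_rpow_le_exp_div_rpow hp hlog (log_le_log hx0 hxy)
  rw [exp_log hx0, exp_log (hx0.trans_le hxy)] at h
  simp only [mul_div_assoc]
  exact mul_le_mul_of_nonneg_left h hc

lemma rpow_add_le_rpow_add_div {γ s h : ℝ} (hγ0 : 0 ≤ γ) (hγ1 : γ ≤ 1) (hs : 0 < s)
    (hh : 0 ≤ h) : (s + h) ^ γ ≤ s ^ γ + γ * h / s ^ (1 - γ) := by
  have hhs : -1 ≤ h / s := by linarith [div_nonneg hh hs.le]
  calc (s + h) ^ γ = s ^ γ * (1 + h / s) ^ γ := by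
        rw [← mul_rpow hs.le (by positivity), mul_one_add, mul_div_cancel₀ _ hs.ne']
    _ ≤ s ^ γ * (1 + γ * (h / s)) :=
        mul_le_mul_of_nonneg_left (rpow_one_add_le_one_add_mul_self hhs hγ0 hγ1) (by positivity)
    _ = s ^ γ + γ * h / s ^ (1 - γ) := by
        rw [rpow_sub hs, rpow_one]
        field_simp

lemma exp_rpow_add_le {γ s h : ℝ} (hγ0 : 0 ≤ γ) (hγ1 : γ ≤ 1) (hs : 1 ≤ s) (hh : 0 ≤ h)
    (hγh : γ * h ≤ 1) :
    exp ((s + h) ^ γ) ≤ exp (s ^ γ) + 2 * γ * h * exp (s ^ γ) / s ^ (1 - γ) := by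
  have hs0 : 0 < s := one_pos.trans_le hs
  set d := γ * h / s ^ (1 - γ)
  have hd0 : 0 ≤ d := by positivity
  have hd1 : d ≤ 1 := by
    refine div_le_of_le_mul₀ (by positivity) zero_le_one ?_
    exact hγh.trans (by simpa using one_le_rpow hs (by linarith : 0 ≤ 1 - γ))
  have hexp : exp d ≤ 1 + 2 * d := by
    have := abs_exp_sub_one_le (x := d) (by rwa [abs_of_nonneg hd0])
    rw [abs_of_nonneg hd0] at this
    linarith [le_abs_self (exp d - 1)]
  calc exp ((s + h) ^ γ) ≤ exp (s ^ γ + d) :=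
        exp_le_exp.2 (rpow_add_le_rpow_add_div hγ0 hγ1 hs0 hh)
    _ = exp (s ^ γ) * exp d := exp_add _ _
    _ ≤ exp (s ^ γ) * (1 + 2 * d) := mul_le_mul_of_nonneg_left hexp (exp_pos _).le
    _ = exp (s ^ γ) + 2 * γ * h * exp (s ^ γ) / s ^ (1 - γ) := by ring

lemma isLittleO_rpow_rpow_atTop {β γ : ℝ} (h : β < γ) :
    (fun x : ℝ => x ^ β) =o[atTop] fun x => x ^ γ := by
  refine (isLittleO_iff_tendsto' ?_).2 ?_
  · filter_upwards [eventually_gt_atTop 0] with x hx h0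
    exact absurd h0 (rpow_pos_of_pos hx γ).ne'
  · refine (tendsto_rpow_neg_atTop (sub_pos.2 h)).congr' ?_
    filter_upwards [eventually_gt_atTop 0] with x hx
    rw [← rpow_sub hx, neg_sub]

lemma isLittleO_mul_exp_rpow {β γ b : ℝ} (hβγ : β < γ) (hγ : 0 < γ) (hb : 0 < b) (r : ℝ) :
    (fun x : ℝ => x * exp (x ^ β)) =o[atTop] fun x => exp ((b * x) ^ γ) / (b * x) ^ r := by
  have hlhs : (fun x => exp (log x + x ^ β)) =ᶠ[atTop] fun x : ℝ => x * exp (x ^ β) := by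
    filter_upwards [eventually_gt_atTop 0] with x hx
    rw [exp_add, exp_log hx]
  have hrhs : (fun x => exp ((b * x) ^ γ - r * log (b * x))) =ᶠ[atTop]
      fun x : ℝ => exp ((b * x) ^ γ) / (b * x) ^ r := by
    filter_upwards [eventually_gt_atTop 0] with x hx
    rw [exp_sub, rpow_def_of_pos (mul_pos hb hx) r, mul_comm (log _)]
  refine (isLittleO_exp_comp_exp_comp.2 ?_).congr' hlhs hrhs
  have herr : (fun x => -(r * log b) - (r + 1) * log x - x ^ β) =o[atTop]
      fun x : ℝ => b ^ γ * x ^ γ := by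
    refine IsLittleO.const_mul_right' (isUnit_iff_ne_zero.2 (rpow_pos_of_pos hb γ).ne') ?_
    refine (IsLittleO.sub ?_ ((isLittleO_log_rpow_atTop hγ).const_mul_left _)).sub
      (isLittleO_rpow_rpow_atTop hβγ)
    exact isLittleO_const_left.2 (Or.inr (tendsto_norm_atTop_atTop.comp (tendsto_rpow_atTop hγ)))
  have hmain : Tendsto (fun x : ℝ => b ^ γ * x ^ γ) atTop atTop :=
    (tendsto_rpow_atTop hγ).const_mul_atTop (rpow_pos_of_pos hb γ)
  refine (IsLittleO.isEquivalent ?_).symm.tendsto_atTop hmain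
  refine herr.congr' ?_ EventuallyEq.rfl
  filter_upwards [eventually_gt_atTop 0] with x hx
  simp only [Pi.sub_apply]
  rw [mul_rpow hb.le hx.le, log_mul hb.ne' hx.ne']
  ring

lemma exists_barrier {c α β D : ℝ} (hc : 0 < c) (hα : 0 < α) (hβ : β < α / (α + 1)) :
    ∃ g : ℕ → ℝ, StrictMono g ∧ Tendsto g atTop atTop ∧ ∀ᶠ n : ℕ in atTop,
      g (n + 1) + D * (n + 1) * exp (((n : ℝ) + 1) ^ β)
        ≤ g n + c * g n / log (g n) ^ (1 / α) := by
  have hγα : α / (α + 1) * (1 / α) = 1 - α / (α + 1) := by field_simp; ring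
  set γ := α / (α + 1)
  have hγ0 : 0 < γ := by positivity
  have hγ1 : γ < 1 := (div_lt_one (by linarith)).2 (by linarith)
  set b := min 1 (c / 4)
  have hb : 0 < b := lt_min one_pos (by positivity)
  have hx : Tendsto (fun n : ℕ => (n : ℝ) + 1) atTop atTop :=
    tendsto_natCast_atTop_atTop.atTop_add tendsto_const_nhds
  have hs : Tendsto (fun n : ℕ => b * ((n : ℝ) + 1)) atTop atTop := hx.const_mul_atTop hb
  refine ⟨fun n => exp ((b * ((n : ℝ) + 1)) ^ γ), fun m n hmn => ?_,
    tendsto_exp_atTop.comp ((tendsto_rpow_atTop hγ0).comp hs), ?_⟩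
  · refine exp_lt_exp.2 (rpow_lt_rpow (by positivity) ?_ hγ0)
    exact mul_lt_mul_of_pos_left (by simpa using hmn) hb
  have hsmall := ((isLittleO_mul_exp_rpow hβ hγ0 hb (1 - γ)).comp_tendsto hx).const_mul_left D
  filter_upwards [hs.eventually_ge_atTop 1, hsmall.bound (half_pos hc)] with n hs1 hDn
  simp only [Function.comp_apply, norm_eq_abs] at hDn
  set s := b * ((n : ℝ) + 1)
  have hs0 : 0 < s := one_pos.trans_le hs1
  simp only [Nat.cast_add, Nat.cast_one, log_exp]
  rw [← rpow_mul hs0.le, hγα, show b * ((n : ℝ) + 1 + 1) = s + b by ring]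
  -- With `E` below, the isoperimetric gain is `c * E` and the barrier grows by at most
  -- `2 * γ * b * E`; hence the choice `b ≤ c / 4`.
  have hgrow := exp_rpow_add_le hγ0.le hγ1.le hs1 hb.le
    (by nlinarith [min_le_left 1 (c / 4)] : γ * b ≤ 1)
  have hb4 : 2 * γ * b ≤ c / 2 := by nlinarith [min_le_right 1 (c / 4)]
  rw [mul_div_assoc] at hgrow ⊢
  set E := exp (s ^ γ) / s ^ (1 - γ)
  have hE : 0 < E := by positivity
  have hD : D * ((n : ℝ) + 1) * exp (((n : ℝ) + 1) ^ β) ≤ c / 2 * E := by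
    rw [mul_assoc, ← abs_of_pos hE]
    exact (le_abs_self _).trans hDn
  nlinarith [mul_le_mul_of_nonneg_right hb4 hE.le]

lemma sum_range_le_mul_exp_rpow {f : ℕ → ℕ} {D β : ℝ} (hD₀ : 0 ≤ D) (hβ : 0 ≤ β)
    (hD : ∀ m, (f m : ℝ) ≤ D * exp ((m : ℝ) ^ β)) (n : ℕ) :
    ∑ i ∈ Finset.range n, (f (i + 1) : ℝ) ≤ D * n * exp ((n : ℝ) ^ β) := by
  calc ∑ i ∈ Finset.range n, (f (i + 1) : ℝ)
      ≤ ∑ _i ∈ Finset.range n, D * exp ((n : ℝ) ^ β) := by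
        refine Finset.sum_le_sum fun i hi => (hD (i + 1)).trans ?_
        have hin : ((i + 1 : ℕ) : ℝ) ≤ n := by exact_mod_cast Finset.mem_range.1 hi
        gcongr
    _ = D * n * exp ((n : ℝ) ^ β) := by
        rw [Finset.sum_const, Finset.card_range, nsmul_eq_mul]
        ring

namespace SimpleGraph

variable {V : Type*} (G : SimpleGraph V)

lemma isoProfile_le_ncard_outerBoundary {K : Set V} (hK : K.Finite) :
    G.isoProfile K.ncard ≤ (G.outerBoundary K).ncard :=
  Nat.sInf_le ⟨K, hK, rfl, rfl⟩

lemma isoProfile_eq_zero_of_card_lt [Finite V] {k : ℕ} (hk : Nat.card V < k) :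
    G.isoProfile k = 0 := by
  refine Nat.sInf_eq_zero.2 (Or.inr (Set.eq_empty_of_forall_notMem ?_))
  rintro m ⟨K, -, rfl, -⟩
  exact hk.not_ge (Set.ncard_le_card K)

end SimpleGraph

namespace FireStrategy

variable {V : Type*} {G : SimpleGraph V} {f : ℕ → ℕ} {K P : ℕ → Set V}

lemma burning_mono (h : FireStrategy G f K P) : Monotone K :=
  monotone_nat_of_le_succ fun n => (h.spread n).symm ▸ Set.subset_union_left

lemma ncard_protected_le (h : FireStrategy G f K P) (n : ℕ) :
    (P n).ncard ≤ ∑ i ∈ Finset.range n, f (i + 1) := by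
  induction n with
  | zero => simp [h.protected_zero]
  | succ n ih =>
    rw [Finset.sum_range_succ, ← Set.union_sdiff_cancel (h.protected_mono n)]
    exact (Set.ncard_union_le _ _).trans (add_le_add ih (h.protected_card n))

lemma outerBoundary_subset (h : FireStrategy G f K P) (n : ℕ) :
    G.outerBoundary (K n) ⊆ (K (n + 1) \ K n) ∪ P (n + 1) := by
  intro v hv
  by_cases hvP : v ∈ P (n + 1)
  · exact Or.inr hvP
  · exact Or.inl ⟨(h.spread n).symm ▸ Or.inr ⟨hv, hvP⟩, hv.1⟩

lemma ncard_add_ncard_outerBoundary_le (h : FireStrategy G f K P) (n : ℕ) :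
    (K n).ncard + (G.outerBoundary (K n)).ncard ≤ (K (n + 1)).ncard + (P (n + 1)).ncard := by
  have hnew := Set.ncard_sdiff_add_ncard_of_subset (h.burning_mono (Nat.le_add_right n 1))
    (h.burning_finite _)
  have hbd := (Set.ncard_le_ncard (h.outerBoundary_subset n)
    (((h.burning_finite _).sdiff).union (h.protected_finite _))).trans (Set.ncard_union_le _ _)
  omega

lemma ncard_add_le_ncard_succ_add_sum (h : FireStrategy G f K P) {ψ : ℝ → ℝ} {t x : ℝ} {n : ℕ}
    (hψ : ∀ S : Set V, S.Finite → t ≤ S.ncard → ψ S.ncard ≤ (G.outerBoundary S).ncard)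
    (hψ_mono : MonotoneOn ψ (Set.Ici t)) (htx : t ≤ x) (hxK : x ≤ (K n).ncard) :
    (K n).ncard + ψ x ≤ (K (n + 1)).ncard + ∑ i ∈ Finset.range (n + 1), (f (i + 1) : ℝ) := by
  have hψK : ψ x ≤ ψ (K n).ncard := hψ_mono htx (htx.trans hxK) hxK
  have hψbd := hψ _ (h.burning_finite n) (htx.trans hxK)
  have hgrow : ((K n).ncard : ℝ) + (G.outerBoundary (K n)).ncard
      ≤ (K (n + 1)).ncard + (P (n + 1)).ncard := by
    exact_mod_cast h.ncard_add_ncard_outerBoundary_le n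
  have hP : ((P (n + 1)).ncard : ℝ) ≤ ∑ i ∈ Finset.range (n + 1), (f (i + 1) : ℝ) := by
    exact_mod_cast h.ncard_protected_le (n + 1)
  linarith

lemma barrier_le_ncard (h : FireStrategy G f K P) {ψ : ℝ → ℝ} {g : ℕ → ℝ} {n₀ n : ℕ}
    (hψ : ∀ S : Set V, S.Finite → g n₀ ≤ S.ncard → ψ S.ncard ≤ (G.outerBoundary S).ncard)
    (hψ_mono : MonotoneOn ψ (Set.Ici (g n₀))) (hg : Monotone g)
    (hstep : ∀ n ≥ n₀, g (n + 1) + ∑ i ∈ Finset.range (n + 1), (f (i + 1) : ℝ) ≤ g n + ψ (g n))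
    (h₀ : g n₀ ≤ (K 0).ncard) (hn : n₀ ≤ n) : g n ≤ (K n).ncard := by
  induction n, hn using Nat.le_induction with
  | base =>
    have := Set.ncard_le_ncard (h.burning_mono (Nat.zero_le n₀)) (h.burning_finite n₀)
    exact h₀.trans (by exact_mod_cast this)
  | succ n hn ih =>
    linarith [h.ncard_add_le_ncard_succ_add_sum hψ hψ_mono (hg hn) ih, hstep n hn]

theorem not_eventually_const_of_barrier (h : FireStrategy G f K P) {ψ : ℝ → ℝ} {g : ℕ → ℝ}
    {n₀ : ℕ}
    (hψ : ∀ S : Set V, S.Finite → g n₀ ≤ S.ncard → ψ S.ncard ≤ (G.outerBoundary S).ncard)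
    (hψ_mono : MonotoneOn ψ (Set.Ici (g n₀))) (hg : StrictMono g)
    (hstep : ∀ n ≥ n₀, g (n + 1) + ∑ i ∈ Finset.range (n + 1), (f (i + 1) : ℝ) ≤ g n + ψ (g n))
    (h₀ : g n₀ ≤ (K 0).ncard) : ¬ ∃ N : ℕ, ∀ n : ℕ, N ≤ n → K n = K N := by
  rintro ⟨N, hN⟩
  set m := max N n₀
  have hm : n₀ ≤ m := le_max_right _ _
  have hgK := h.barrier_le_ncard hψ hψ_mono hg.monotone hstep h₀ hm
  have hK : K (m + 1) = K m := (hN _ (by omega)).trans (hN _ (le_max_left _ _)).symm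
  have hstuck := h.ncard_add_le_ncard_succ_add_sum hψ hψ_mono (hg.monotone hm) hgK
  rw [hK] at hstuck
  linarith [hstep _ hm, hg (Nat.lt_succ_self m)]

end FireStrategy

theorem exists_uncontainable_fire_size {V : Type*} (G : SimpleGraph V)
    {c α β : ℝ} (hc : 0 < c) (hα : 0 < α)
    (hiso : ∀ k : ℕ, 2 ≤ k → c * (k : ℝ) / (Real.log (k : ℝ)) ^ (1 / α) ≤ (G.isoProfile k : ℝ))
    (hβ₀ : 0 < β) (hβ : β < α / (α + 1)) {f : ℕ → ℕ}
    (hf : (fun n => (f n : ℝ)) =o[atTop] fun n => exp ((n : ℝ) ^ β)) :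
    ∃ C : ℕ, 0 < C ∧ ∀ K P : ℕ → Set V, FireStrategy G f K P → C ≤ (K 0).ncard →
      ¬ ∃ N : ℕ, ∀ n : ℕ, N ≤ n → K n = K N := by
  obtain ⟨D, hD₀, hD⟩ := bound_of_isBigO_nat_atTop hf.isBigO
  replace hD : ∀ m, (f m : ℝ) ≤ D * exp ((m : ℝ) ^ β) := fun m => by
    simpa [abs_of_pos (exp_pos _)] using hD (exp_pos ((m : ℝ) ^ β)).ne'
  obtain ⟨g, hg, hg_top, hstep⟩ := exists_barrier (D := D) hc hα hβ
  obtain ⟨n₀, hn₀⟩ := eventually_atTop.1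
    ((hg_top.eventually_ge_atTop (max 2 (exp (1 / α)))).and hstep)
  have hg₀ := (hn₀ n₀ le_rfl).1
  refine ⟨⌈g n₀⌉₊, Nat.ceil_pos.2 (by linarith [le_max_left 2 (exp (1 / α))]),
    fun K P h hK₀ => h.not_eventually_const_of_barrier (ψ := fun x => c * x / log x ^ (1 / α))
      ?_ ?_ hg ?_ ((Nat.le_ceil _).trans (by exact_mod_cast hK₀))⟩
  · intro S hS hgS
    have h2 : 2 ≤ S.ncard := by exact_mod_cast (le_max_left _ _).trans (hg₀.trans hgS)
    exact (hiso _ h2).trans (by exact_mod_cast G.isoProfile_le_ncard_outerBoundary hS)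
  · exact (monotoneOn_mul_div_log_rpow hc.le (by positivity)).mono
      (Set.Ici_subset_Ici.2 ((le_max_right _ _).trans hg₀))
  · intro n hn
    have hbudget := sum_range_le_mul_exp_rpow hD₀.le hβ₀.le hD (n + 1)
    push_cast at hbudget
    linarith [(hn₀ n hn).2]

theorem firefighter_isoperimetric_stretched_general {V : Type*} (G : SimpleGraph V)
    (c : ℝ) (hc : 0 < c) (α : ℝ) (hα0 : 0 < α)
    (hiso : ∀ k : ℕ, 2 ≤ k →
      c * (k : ℝ) / (Real.log (k : ℝ)) ^ (1 / α) ≤ (G.isoProfile k : ℝ))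
    (β : ℝ) (hβ0 : 0 < β) (hβ : β < α / (α + 1))
    (f : ℕ → ℕ)
    (hf : (fun n => (f n : ℝ)) =o[atTop] fun n => Real.exp ((n : ℝ) ^ β)) :
    ¬ HasContainment G f ∧
      ∃ C : ℕ, 0 < C ∧ ∀ K P : ℕ → Set V, FireStrategy G f K P → C ≤ (K 0).ncard →
        ¬ ∃ N : ℕ, ∀ n : ℕ, N ≤ n → K n = K N := by
  obtain ⟨C, hC₀, hC⟩ := exists_uncontainable_fire_size G hc hα0 hiso hβ0 hβ hf
  refine ⟨fun hcont => ?_, C, hC₀, hC⟩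
  have : Infinite V := by
    by_contra hfin
    have : Finite V := not_infinite_iff_finite.1 hfin
    have hk := hiso (Nat.card V + 2) le_add_self
    rw [G.isoProfile_eq_zero_of_card_lt (by omega), Nat.cast_zero] at hk
    have hlog : 0 < log ((Nat.card V + 2 : ℕ) : ℝ) := log_pos (by norm_cast; omega)
    exact hk.not_gt (div_pos (by positivity) (rpow_pos_of_pos hlog _))
  obtain ⟨K₀, -, hK₀, hcard⟩ := (Set.infinite_univ (α := V)).exists_subset_ncard_eq C
  obtain ⟨K, P, rfl, h, hN⟩ := hcont K₀ hK₀
  exact hC K P h hcard.ge hN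

/-- Let `G` be a connected locally finite graph whose isoperimetric profile satisfies
`Φ(k) ≥ c * k / (log k)^(1/α)` for all `k ≥ 2`, where `c > 0` and `0 < α ≤ 1`.
Fix `0 < β < α/(α+1)` and `f(n) = o(e^{n^β})`. Then `G` does not satisfy
`{f(n)}`-containment; moreover there is `C > 0` such that no initial fire of size at
least `C` can be contained. -/
theorem firefighter_isoperimetric_stretched {V : Type*} (G : SimpleGraph V)
    (hconn : G.Connected) (hlf : G.LocallyFinite)
    (c : ℝ) (hc : 0 < c) (α : ℝ) (hα0 : 0 < α) (hα1 : α ≤ 1)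
    (hiso : ∀ k : ℕ, 2 ≤ k →
      c * (k : ℝ) / (Real.log (k : ℝ)) ^ (1 / α) ≤ (G.isoProfile k : ℝ))
    (β : ℝ) (hβ0 : 0 < β) (hβ : β < α / (α + 1))
    (f : ℕ → ℕ)
    (hf : (fun n => (f n : ℝ)) =o[atTop] fun n => Real.exp ((n : ℝ) ^ β)) :
    ¬ HasContainment G f ∧
      ∃ C : ℕ, 0 < C ∧ ∀ K P : ℕ → Set V, FireStrategy G f K P → C ≤ (K 0).ncard →
        ¬ ∃ N : ℕ, ∀ n : ℕ, N ≤ n → K n = K N :=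
  firefighter_isoperimetric_stretched_general G c hc α hα0 hiso β hβ0 hβ f hf
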